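/- For every real b with b ≥ 0.773 and b < 1, we have (2b)^b · (1-b)^(1-b) > 1. -/

import Mathlib

/-!
Write `F(a, b) = (2a)^b (1-a)^(1-b)`. Gibbs' inequality (weighted AM–GM applied to `a/b` and
`(1-a)/(1-b)`) gives `F(a, b) ≤ F(b, b)`, and `F(a, ·)` is nondecreasing when `1 - a ≤ 2a`.
Hence for `b ≥ a = 0.773` the quantity `F(b, b)` is at least `F(a, a)`, and
`F(a, a)^1000 = 1546^773 · 227^227 / 1000^1000 > 1` is a finite integer computation.
-/

open Real

lemma rpow_mul_one_sub_rpow_le_self {a b : ℝ} (ha₀ : 0 ≤ a) (ha₁ : a ≤ 1) (hb₀ : 0 < b)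
    (hb₁ : b < 1) : a ^ b * (1 - a) ^ (1 - b) ≤ b ^ b * (1 - b) ^ (1 - b) := by
  have hb₁' : 0 < 1 - b := sub_pos.mpr hb₁
  have amgm := geom_mean_le_arith_mean2_weighted hb₀.le hb₁'.le (div_nonneg ha₀ hb₀.le)
    (div_nonneg (sub_nonneg.mpr ha₁) hb₁'.le) (add_sub_cancel b 1)
  have hsum : b * (a / b) + (1 - b) * ((1 - a) / (1 - b)) = 1 := by field_simp; ring
  rwa [hsum, div_rpow ha₀ hb₀.le, div_rpow (sub_nonneg.mpr ha₁) hb₁'.le, div_mul_div_comm,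
    div_le_one (by positivity)] at amgm

lemma rpow_mul_rpow_one_sub_le_of_le {p q a b : ℝ} (hq : 0 < q) (hqp : q ≤ p) (hab : a ≤ b) :
    p ^ a * q ^ (1 - a) ≤ p ^ b * q ^ (1 - b) := by
  have hp : 0 < p := hq.trans_le hqp
  rw [rpow_def_of_pos hp, rpow_def_of_pos hp, rpow_def_of_pos hq, rpow_def_of_pos hq,
    ← exp_add, ← exp_add, exp_le_exp]
  nlinarith [log_le_log hq hqp]

lemma two_mul_rpow_mul_one_sub_rpow_0773_gt_one :
    1 < (2 * 0.773 : ℝ) ^ (0.773 : ℝ) * (1 - 0.773) ^ (1 - 0.773 : ℝ) := by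
  have hpow : ((2 * 0.773 : ℝ) ^ (0.773 : ℝ) * (1 - 0.773) ^ (1 - 0.773 : ℝ)) ^ (1000 : ℕ) =
      (1546 / 1000 : ℝ) ^ 773 * (227 / 1000) ^ 227 := by
    rw [mul_pow, ← rpow_natCast, ← rpow_natCast, ← rpow_mul (by norm_num),
      ← rpow_mul (by norm_num)]
    norm_num
  have hint : (1000 ^ 1000 : ℕ) < 1546 ^ 773 * 227 ^ 227 := by decide +kernel
  rw [← one_lt_pow_iff_of_nonneg (by positivity) (by norm_num : 1000 ≠ 0), hpow, div_pow, div_pow,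
    div_mul_div_comm, ← pow_add, one_lt_div (by positivity)]
  simpa only [Nat.cast_pow, Nat.cast_mul, Nat.cast_ofNat] using Nat.cast_lt (α := ℝ) |>.mpr hint

/-- For 0.773 ≤ b < 1 we have (2b)^b (1-b)^(1-b) > 1. -/
theorem stmt_4 (b : ℝ) (h₁ : 0.773 ≤ b) (h₂ : b < 1) :
    1 < (2 * b) ^ b * (1 - b) ^ (1 - b) := by
  have hb₀ : 0 < b := lt_of_lt_of_le (by norm_num) h₁
  calc 1 < (2 * 0.773 : ℝ) ^ (0.773 : ℝ) * (1 - 0.773) ^ (1 - 0.773 : ℝ) :=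
        two_mul_rpow_mul_one_sub_rpow_0773_gt_one
    _ ≤ (2 * 0.773) ^ b * (1 - 0.773) ^ (1 - b) :=
        rpow_mul_rpow_one_sub_le_of_le (by norm_num) (by norm_num) h₁
    _ = 2 ^ b * ((0.773 : ℝ) ^ b * (1 - 0.773) ^ (1 - b)) := by
        rw [mul_rpow (by norm_num) (by norm_num), mul_assoc]
    _ ≤ 2 ^ b * (b ^ b * (1 - b) ^ (1 - b)) :=
        mul_le_mul_of_nonneg_left
          (rpow_mul_one_sub_rpow_le_self (by norm_num) (by norm_num) hb₀ h₂) (by positivity)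
    _ = (2 * b) ^ b * (1 - b) ^ (1 - b) := by
        rw [mul_rpow (by norm_num) hb₀.le, mul_assoc]
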